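/- Let F be a field of characteristic ≠ 2 and P an ordering of F. The only two prepositive cones on (M_n(F), t) over P are the set of symmetric matrices positive semidefinite with respect to P and the set of symmetric matrices negative semidefinite with respect to P. -/

import Mathlib

/-!
Congruence by the matrix whose `k`-th column is `x` and whose other columns vanish sends `M`
to `(xᵀ M x) E_kk`, so a cone containing `M` contains `c E_kk` for every value `c` of the
quadratic form of `M`. A nonzero symmetric matrix has a nonzero value in characteristic `≠ 2`,
and rescaling by `±c⁻¹ ∈ P` puts `E_kk` into `PC` or into `-PC`. If `E_kk ∈ PC`, properness
forces every `c` with `c E_kk ∈ PC` into `P`, whence `PC` consists of positive semidefinite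
matrices; conversely, a positive semidefinite matrix is congruent to a diagonal matrix
`∑ dᵢ E_ii` with all `dᵢ ∈ P`, each summand of which lies in `PC`.
-/

open Matrix

/-- An ordering on a field `F`. -/
def IsOrdering {F : Type*} [Field F] (P : Set F) : Prop :=
  (∀ x ∈ P, ∀ y ∈ P, x + y ∈ P) ∧ (∀ x ∈ P, ∀ y ∈ P, x * y ∈ P) ∧
  (∀ x : F, x ∈ P ∨ -x ∈ P) ∧ (∀ x ∈ P, -x ∈ P → x = 0)

/-- A prepositive cone on `(M_n(F), t)` (transpose involution) over an ordering `P`: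
a set of symmetric matrices, nonempty, closed under addition and under
`M ↦ Xᵀ M X`, whose set of preserving scalars is exactly `P`, and proper. -/
def IsMatPrepositiveConeOver {F : Type*} [Field F] {n : ℕ} (P : Set F)
    (PC : Set (Matrix (Fin n) (Fin n) F)) : Prop :=
  (∀ M ∈ PC, Mᵀ = M) ∧ PC.Nonempty ∧ (∀ a ∈ PC, ∀ b ∈ PC, a + b ∈ PC) ∧
  (∀ X : Matrix (Fin n) (Fin n) F, ∀ M ∈ PC, Xᵀ * M * X ∈ PC) ∧
  {u : F | ∀ M ∈ PC, u • M ∈ PC} = P ∧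
  (∀ M ∈ PC, -M ∈ PC → M = 0)

open Pointwise

section LinearAlgebra

variable {ι R : Type*} [Fintype ι] [DecidableEq ι] [CommRing R]

theorem Matrix.toBilin'_transpose_mul_mul (M X : Matrix ι ι R) (x y : ι → R) :
    toBilin' (Xᵀ * M * X) x y = toBilin' M (X *ᵥ x) (X *ᵥ y) := by
  rw [← toBilin'_comp]
  rfl

theorem Matrix.transpose_vecMulVec_mul_mul_vecMulVec (M : Matrix ι ι R) (x y : ι → R) :
    (vecMulVec x y)ᵀ * M * vecMulVec x y = toBilin' M x x • vecMulVec y y := by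
  rw [transpose_vecMulVec, vecMulVec_mul, vecMulVec_mul_vecMulVec, ← dotProduct_mulVec,
    ← toBilin'_apply', vecMulVec_smul]

theorem Matrix.IsSymm.exists_toBilin'_self_ne_zero [Invertible (2 : R)] {M : Matrix ι ι R}
    (hM : M.IsSymm) (h0 : M ≠ 0) : ∃ x, toBilin' M x x ≠ 0 :=
  LinearMap.BilinForm.exists_bilinForm_self_ne_zero ((LinearEquiv.map_ne_zero_iff _).2 h0)
    (LinearMap.BilinForm.isSymm_iff.1 (isSymm_toBilin'_iff_isSymm.2 hM))

theorem Matrix.IsSymm.exists_isUnit_isDiag_transpose_mul_mul {K : Type*} [Field K]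
    [Invertible (2 : K)] {M : Matrix ι ι K} (hM : M.IsSymm) :
    ∃ X : Matrix ι ι K, IsUnit X ∧ (Xᵀ * M * X).IsDiag := by
  obtain ⟨v, hv⟩ := LinearMap.BilinForm.exists_orthogonal_basis
    (LinearMap.BilinForm.isSymm_iff.1 (isSymm_toBilin'_iff_isSymm.2 hM))
  let e := Pi.basisFun K ι
  let b := v.reindex (v.indexEquiv e)
  have := e.invertibleToMatrix b
  have key := LinearMap.BilinForm.toMatrix_mul_basis_toMatrix e b (toBilin' M)
  rw [LinearMap.BilinForm.toMatrix_basisFun, LinearMap.BilinForm.toMatrix'_toBilin'] at key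
  refine ⟨e.toMatrix b, isUnit_of_invertible _, ?_⟩
  rw [key]
  intro i j hij
  change LinearMap.BilinForm.toMatrix b (toBilin' M) i j = 0
  rw [LinearMap.BilinForm.toMatrix_apply, Module.Basis.reindex_apply, Module.Basis.reindex_apply]
  exact hv ((v.indexEquiv e).symm.injective.ne hij)

end LinearAlgebra

namespace IsOrdering

variable {F : Type*} [Field F] {P : Set F}

theorem mem_or_neg_mem (hP : IsOrdering P) (a : F) : a ∈ P ∨ -a ∈ P := hP.2.2.1 a

theorem eq_zero_of_mem_of_neg_mem (hP : IsOrdering P) {a : F} (ha : a ∈ P) (ha' : -a ∈ P) :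
    a = 0 :=
  hP.2.2.2 a ha ha'

theorem add_mem (hP : IsOrdering P) {a b : F} (ha : a ∈ P) (hb : b ∈ P) : a + b ∈ P :=
  hP.1 a ha b hb

theorem mul_mem (hP : IsOrdering P) {a b : F} (ha : a ∈ P) (hb : b ∈ P) : a * b ∈ P :=
  hP.2.1 a ha b hb

theorem mul_self_mem (hP : IsOrdering P) (a : F) : a * a ∈ P := by
  rcases hP.mem_or_neg_mem a with h | h
  · exact hP.mul_mem h h
  · simpa using hP.mul_mem h h

theorem neg_one_notMem (hP : IsOrdering P) : (-1 : F) ∉ P := fun h =>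
  one_ne_zero (hP.eq_zero_of_mem_of_neg_mem (by simpa using hP.mul_self_mem 1) (by simpa using h))

def toRingPreordering (hP : IsOrdering P) : RingPreordering F :=
  .mk' P hP.add_mem hP.mul_mem hP.mul_self_mem hP.neg_one_notMem

theorem zero_mem (hP : IsOrdering P) : (0 : F) ∈ P :=
  hP.toRingPreordering.zero_mem

theorem inv_mem (hP : IsOrdering P) {a : F} (ha : a ∈ P) : a⁻¹ ∈ P :=
  RingPreordering.inv_mem (P := hP.toRingPreordering) ha

end IsOrdering

section

variable {F : Type*} [Field F]

def psdMatrices (P : Set F) (ι : Type*) [Fintype ι] [DecidableEq ι] : Set (Matrix ι ι F) :=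
  {M | M.IsSymm ∧ ∀ x, toBilin' M x x ∈ P}

section psdMatrices

variable {ι : Type*} [Fintype ι] [DecidableEq ι] {P : Set F}

theorem transpose_mul_mul_mem_psdMatrices {M : Matrix ι ι F} (hM : M ∈ psdMatrices P ι)
    (X : Matrix ι ι F) : Xᵀ * M * X ∈ psdMatrices P ι :=
  ⟨by simp [IsSymm, Matrix.mul_assoc, hM.1.eq], fun x => by
    rw [toBilin'_transpose_mul_mul]; exact hM.2 _⟩

theorem diag_mem_of_mem_psdMatrices {M : Matrix ι ι F} (hM : M ∈ psdMatrices P ι) (i : ι) :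
    M i i ∈ P := by
  simpa using hM.2 (Pi.single i 1)

theorem single_one_mem_psdMatrices (hP : IsOrdering P) (k : ι) :
    single k k (1 : F) ∈ psdMatrices P ι :=
  ⟨by simp [IsSymm], fun x => by
    simpa [toBilin'_apply, single_apply, ite_and] using hP.mul_self_mem (x k)⟩

theorem isMatPrepositiveConeOver_psdMatrices (h2 : (2 : F) ≠ 0) (hP : IsOrdering P) (n : ℕ)
    [NeZero n] : IsMatPrepositiveConeOver P (psdMatrices P (Fin n)) := by
  have := invertibleOfNonzero h2
  refine ⟨fun M hM => hM.1, ⟨0, by simp [psdMatrices, IsSymm, hP.zero_mem]⟩,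
    fun A hA B hB => ⟨hA.1.add hB.1, fun x => ?_⟩,
    fun X M hM => transpose_mul_mul_mem_psdMatrices hM X, Set.ext fun u => ⟨fun hu => ?_, ?_⟩,
    fun M hM hM' => ?_⟩
  · simpa using hP.add_mem (hA.2 x) (hB.2 x)
  · simpa using diag_mem_of_mem_psdMatrices (hu _ (single_one_mem_psdMatrices hP 0)) 0
  · intro hu M hM
    exact ⟨hM.1.smul u, fun x => by simpa using hP.mul_mem hu (hM.2 x)⟩
  · by_contra h0
    obtain ⟨x, hx⟩ := hM.1.exists_toBilin'_self_ne_zero h0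
    exact hx (hP.eq_zero_of_mem_of_neg_mem (hM.2 x) (by simpa using hM'.2 x))

end psdMatrices

namespace IsMatPrepositiveConeOver

variable {n : ℕ} {P : Set F} {PC : Set (Matrix (Fin n) (Fin n) F)}

theorem isSymm (hc : IsMatPrepositiveConeOver P PC) {M : Matrix (Fin n) (Fin n) F}
    (hM : M ∈ PC) : M.IsSymm :=
  hc.1 M hM

theorem nonempty (hc : IsMatPrepositiveConeOver P PC) : PC.Nonempty :=
  hc.2.1

theorem add_mem (hc : IsMatPrepositiveConeOver P PC) {A B : Matrix (Fin n) (Fin n) F}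
    (hA : A ∈ PC) (hB : B ∈ PC) : A + B ∈ PC :=
  hc.2.2.1 A hA B hB

theorem transpose_mul_mul_mem (hc : IsMatPrepositiveConeOver P PC) (X : Matrix (Fin n) (Fin n) F)
    {M : Matrix (Fin n) (Fin n) F} (hM : M ∈ PC) : Xᵀ * M * X ∈ PC :=
  hc.2.2.2.1 X M hM

theorem setOf_forall_smul_mem_eq (hc : IsMatPrepositiveConeOver P PC) :
    {u : F | ∀ M ∈ PC, u • M ∈ PC} = P :=
  hc.2.2.2.2.1

theorem smul_mem (hc : IsMatPrepositiveConeOver P PC) {u : F} (hu : u ∈ P)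
    {M : Matrix (Fin n) (Fin n) F} (hM : M ∈ PC) : u • M ∈ PC :=
  (hc.setOf_forall_smul_mem_eq.symm ▸ hu : u ∈ {u : F | ∀ M ∈ PC, u • M ∈ PC}) M hM

theorem eq_zero_of_mem_of_neg_mem (hc : IsMatPrepositiveConeOver P PC)
    {M : Matrix (Fin n) (Fin n) F} (hM : M ∈ PC) (hM' : -M ∈ PC) : M = 0 :=
  hc.2.2.2.2.2 M hM hM'

def toAddSubmonoid (hc : IsMatPrepositiveConeOver P PC) :
    AddSubmonoid (Matrix (Fin n) (Fin n) F) where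
  carrier := PC
  add_mem' := hc.add_mem
  zero_mem' := by
    obtain ⟨M, hM⟩ := hc.nonempty
    simpa using hc.transpose_mul_mul_mem 0 hM

theorem neg (hc : IsMatPrepositiveConeOver P PC) : IsMatPrepositiveConeOver P (-PC) := by
  refine ⟨fun M hM => by simpa using (hc.isSymm hM).eq, hc.nonempty.neg,
    fun A hA B hB => by rw [Set.mem_neg, neg_add]; exact hc.add_mem hA hB,
    fun X M hM => by simpa using hc.transpose_mul_mul_mem X hM, ?_,
    fun M hM hM' => by simpa using hc.eq_zero_of_mem_of_neg_mem hM (by simpa using hM')⟩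
  rw [← hc.setOf_forall_smul_mem_eq]
  ext u
  exact ⟨fun hu M hM => by simpa using hu (-M) (by simpa using hM),
    fun hu M hM => by simpa using hu _ hM⟩

theorem single_mem_of_mem (hc : IsMatPrepositiveConeOver P PC) {M : Matrix (Fin n) (Fin n) F}
    (hM : M ∈ PC) (x : Fin n → F) (k : Fin n) : single k k (toBilin' M x x) ∈ PC := by
  have := hc.transpose_mul_mul_mem (vecMulVec x (Pi.single k 1)) hM
  rwa [transpose_vecMulVec_mul_mul_vecMulVec, ← single_eq_single_vecMulVec_single, smul_single,
    smul_eq_mul, mul_one] at this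

theorem mem_of_single_mem (hP : IsOrdering P) (hc : IsMatPrepositiveConeOver P PC) {k : Fin n}
    (h1 : single k k 1 ∈ PC) {c : F} (hck : single k k c ∈ PC) : c ∈ P := by
  by_contra hcP
  have hneg : -c ∈ P := (hP.mem_or_neg_mem c).resolve_left hcP
  have hc0 : c ≠ 0 := by rintro rfl; exact hcP hP.zero_mem
  have hneg1 : -single k k (1 : F) ∈ PC := by
    have := hc.smul_mem (hP.inv_mem hneg) hck
    rwa [smul_single, smul_eq_mul, inv_neg, neg_mul, inv_mul_cancel₀ hc0, ← single_neg] at this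
  simpa using congrFun₂ (hc.eq_zero_of_mem_of_neg_mem h1 hneg1) k k

theorem single_mem_of_single_one_mem (hc : IsMatPrepositiveConeOver P PC) {k : Fin n}
    (h1 : single k k 1 ∈ PC) {d : F} (hd : d ∈ P) (i : Fin n) : single i i d ∈ PC := by
  simpa using hc.single_mem_of_mem (hc.smul_mem hd h1) (Pi.single k 1) i

theorem diagonal_mem (hc : IsMatPrepositiveConeOver P PC) {k : Fin n} (h1 : single k k 1 ∈ PC)
    {d : Fin n → F} (hd : ∀ i, d i ∈ P) : diagonal d ∈ PC := by
  rw [← sum_single_eq_diagonal]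
  exact hc.toAddSubmonoid.sum_mem fun i _ => hc.single_mem_of_single_one_mem h1 (hd i) i

theorem eq_psdMatrices_of_single_one_mem (h2 : (2 : F) ≠ 0) (hP : IsOrdering P)
    (hc : IsMatPrepositiveConeOver P PC) {k : Fin n} (h1 : single k k 1 ∈ PC) :
    PC = psdMatrices P (Fin n) := by
  have := invertibleOfNonzero h2
  refine Set.Subset.antisymm
    (fun M hM => ⟨hc.isSymm hM, fun x =>
      hc.mem_of_single_mem hP h1 (hc.single_mem_of_mem hM x k)⟩)
    fun M hM => ?_
  obtain ⟨X, hX, hD⟩ := hM.1.exists_isUnit_isDiag_transpose_mul_mul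
  have hD_mem : Xᵀ * M * X ∈ PC := by
    rw [← hD.diagonal_diag]
    exact hc.diagonal_mem h1
      (diag_mem_of_mem_psdMatrices (transpose_mul_mul_mem_psdMatrices hM X) ·)
  obtain ⟨Y, hY⟩ := hX.exists_right_inv
  have hM_eq : M = Yᵀ * (Xᵀ * M * X) * Y := by
    calc M = (X * Y)ᵀ * M * (X * Y) := by rw [hY, transpose_one, Matrix.one_mul, Matrix.mul_one]
      _ = Yᵀ * (Xᵀ * M * X) * Y := by simp only [transpose_mul, Matrix.mul_assoc]
  exact hM_eq ▸ hc.transpose_mul_mul_mem Y hD_mem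

theorem single_one_mem_or_mem_neg (h2 : (2 : F) ≠ 0) (hP : IsOrdering P)
    (hc : IsMatPrepositiveConeOver P PC) (k : Fin n) :
    single k k 1 ∈ PC ∨ single k k 1 ∈ -PC := by
  have := invertibleOfNonzero h2
  obtain ⟨M, hM, hM0⟩ : ∃ M ∈ PC, M ≠ 0 := by
    by_contra! h
    refine hP.neg_one_notMem (hc.setOf_forall_smul_mem_eq ▸ fun M hM => ?_)
    obtain rfl := h M hM
    simpa using hM
  obtain ⟨x, hx⟩ := (hc.isSymm hM).exists_toBilin'_self_ne_zero hM0
  have hsingle := hc.single_mem_of_mem hM x k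
  rcases hP.mem_or_neg_mem (toBilin' M x x) with h | h
  · left
    simpa [smul_single, inv_mul_cancel₀ hx] using hc.smul_mem (hP.inv_mem h) hsingle
  · right
    simpa [smul_single, inv_mul_cancel₀ hx] using hc.smul_mem (hP.inv_mem h) hsingle

end IsMatPrepositiveConeOver

end

/-- The only two prepositive cones on `(M_n(F), t)` over `P` are the sets of symmetric
matrices that are positive semidefinite, resp. negative semidefinite, with respect
to `P`. -/
theorem stmt_13 {F : Type*} [Field F] (h2 : (2 : F) ≠ 0)
    (P : Set F) (hP : IsOrdering P) (n : ℕ) (hn : 0 < n)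
    (PC : Set (Matrix (Fin n) (Fin n) F)) :
    IsMatPrepositiveConeOver P PC ↔
      (PC = {M | Mᵀ = M ∧ ∀ x : Fin n → F, (∑ i, ∑ j, x i * M i j * x j) ∈ P} ∨
       PC = {M | Mᵀ = M ∧ ∀ x : Fin n → F, -(∑ i, ∑ j, x i * M i j * x j) ∈ P}) := by
  have hpsd : {M : Matrix (Fin n) (Fin n) F | Mᵀ = M ∧ ∀ x : Fin n → F,
      (∑ i, ∑ j, x i * M i j * x j) ∈ P} = psdMatrices P (Fin n) := by
    simp only [psdMatrices, IsSymm, toBilin'_apply]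
  have hnsd : {M : Matrix (Fin n) (Fin n) F | Mᵀ = M ∧ ∀ x : Fin n → F,
      -(∑ i, ∑ j, x i * M i j * x j) ∈ P} = -psdMatrices P (Fin n) := by
    ext M
    simp [psdMatrices, IsSymm, toBilin'_apply, neg_eq_iff_eq_neg]
  have := NeZero.of_pos hn
  rw [hpsd, hnsd]
  constructor
  · intro hc
    rcases hc.single_one_mem_or_mem_neg h2 hP 0 with h1 | h1
    · exact .inl (hc.eq_psdMatrices_of_single_one_mem h2 hP h1)
    · exact .inr (by rw [← neg_neg PC, hc.neg.eq_psdMatrices_of_single_one_mem h2 hP h1])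
  · rintro (rfl | rfl)
    · exact isMatPrepositiveConeOver_psdMatrices h2 hP n
    · exact (isMatPrepositiveConeOver_psdMatrices h2 hP n).neg
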